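/- HH rule correctness: let Q : Z_2^n × Z_2^m → Z_2 and R : Z_2^n × Z_2^m → D, where y_i is a designated path variable among y ∈ Z_2^m on which Q does not depend, and let f : Z_2^n × Z_2^m → Z_2^n. Then the operator |x⟩ ↦ (1/√(2^{m+1})) ∑_{y_0∈Z_2} ∑_{y∈Z_2^m} e^{2πi((y_0/2)·(y_i + Q(x,y)) + R(x,y))} |f(x,y)⟩ equals the operator |x⟩ ↦ (1/√(2^{m-1})) ∑_{y'∈Z_2^{m-1}} e^{2πi R(x,y')[y_i ← Q(x,y')]} |f(x,y')[y_i ← Q(x,y')]⟩, where the substitution replaces y_i by the value Q(x,y') in both R and f. -/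
import Mathlib


open scoped BigOperators

/-- The computational basis state `|z⟩` in the `2^n`-dimensional Hilbert space. -/
noncomputable def ket {n : ℕ} (z : Fin n → ZMod 2) : (Fin n → ZMod 2) → ℂ :=
  fun w => if w = z then 1 else 0

/-- The phase `e^{2πi t}` for a (dyadic) rational `t`. -/
noncomputable def ph (t : ℚ) : ℂ := Complex.exp (2 * (Real.pi : ℂ) * Complex.I * (t : ℂ))


lemma ph_add (a b : ℚ) : ph (a + b) = ph a * ph b := by
  simp only [ph, ← Complex.exp_add]
  congr 1
  push_cast
  ring

lemma ph_zero : ph 0 = 1 := by simp [ph]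

lemma ph_one : ph 1 = 1 := by
  simp [ph, Complex.exp_two_pi_mul_I]

lemma ph_half : ph (1/2) = -1 := by
  have h : ((1/2 : ℚ) : ℂ) = 2⁻¹ := by norm_num
  rw [ph, h, show (2 * (Real.pi : ℂ) * Complex.I * 2⁻¹) = Real.pi * Complex.I by ring,
    Complex.exp_pi_mul_I]

lemma update_piSplitAt {m : ℕ} (i : Fin m) (b : {j : Fin m // j ≠ i} → ZMod 2)
    (a v : ZMod 2) :
    Function.update ((Equiv.piSplitAt i (fun _ => ZMod 2)).symm (v, b)) i a
      = (Equiv.piSplitAt i (fun _ => ZMod 2)).symm (a, b) := by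
  funext j
  rcases eq_or_ne j i with h | h
  · subst h; simp [Equiv.piSplitAt]
  · simp [Equiv.piSplitAt, Function.update, h]

lemma sum_update_key {M : Type*} [AddCommMonoid M] {m : ℕ} (i : Fin m)
    (F G : (Fin m → ZMod 2) → M)
    (h : ∀ y, ∑ v : ZMod 2, F (Function.update y i v)
            = ∑ v : ZMod 2, G (Function.update y i v)) :
    ∑ y, F y = ∑ y, G y := by
  have key : ∀ H : (Fin m → ZMod 2) → M,
      ∑ y, H y = ∑ b : {j : Fin m // j ≠ i} → ZMod 2, ∑ a : ZMod 2, H ((Equiv.piSplitAt i (fun _ : Fin m => ZMod 2)).symm (a, b)) := by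
    intro H
    rw [← Fintype.sum_equiv (Equiv.piSplitAt i (fun _ : Fin m => ZMod 2)).symm (fun p => H ((Equiv.piSplitAt i (fun _ : Fin m => ZMod 2)).symm p)) H (fun p => rfl),
      Fintype.sum_prod_type, Finset.sum_comm]
  rw [key F, key G]
  refine Finset.sum_congr rfl fun b _ => ?_
  have := h ((Equiv.piSplitAt i (fun _ : Fin m => ZMod 2)).symm (0, b))
  simpa only [update_piSplitAt] using this

lemma zmod2_cases (q : ZMod 2) : q = 0 ∨ q = 1 := by revert q; decide

/-- HH rule correctness.  With `Q` Boolean-valued and independent of the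
designated path variable `y_i`,
`(1/√(2^(m+1))) ∑_{y₀}∑_y e^{2πi((y₀/2)(y_i + Q(x,y)) + R(x,y))}|f(x,y)⟩`
equals the path-sum obtained by substituting `y_i ← Q` and dropping `y₀, y_i`,
`(1/√(2^(m-1))) ∑_{y'∈ℤ₂^{m-1}} e^{2πi R[y_i←Q]}|f[y_i←Q]⟩`.  The right-hand side is
written by summing over all `m` path variables and updating coordinate `i` to
`Q(x,y)`, which counts each of the `2^(m-1)` surviving paths exactly twice, whence the
normalization `1/√(2^(m+1)) = (1/2)·(1/√(2^(m-1)))`. -/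
theorem stmt7 (n m : ℕ) (i : Fin m)
    (Q : (Fin n → ZMod 2) → (Fin m → ZMod 2) → ZMod 2)
    (R : (Fin n → ZMod 2) → (Fin m → ZMod 2) → ℚ)
    (f : (Fin n → ZMod 2) → (Fin m → ZMod 2) → (Fin n → ZMod 2))
    (hQ : ∀ x y (v : ZMod 2), Q x (Function.update y i v) = Q x y) :
    ∀ x : Fin n → ZMod 2,
      (((Real.sqrt (2 ^ (m + 1)))⁻¹ : ℝ) : ℂ) •
          ∑ y0 : ZMod 2, ∑ y : Fin m → ZMod 2,
            ph ((y0.val : ℚ) * (((y i).val : ℚ) + ((Q x y).val : ℚ)) / 2 + R x y) •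
              ket (f x y)
        = (((Real.sqrt (2 ^ (m + 1)))⁻¹ : ℝ) : ℂ) •
          ∑ y : Fin m → ZMod 2,
            ph (R x (Function.update y i (Q x y))) •
              ket (f x (Function.update y i (Q x y))) := by
  intro x
  congr 1
  rw [Finset.sum_comm]
  refine sum_update_key i _ _ fun y => ?_
  have hupd : ∀ v : ZMod 2, Q x (Function.update y i v) = Q x y := fun v => hQ x y v
  have hu2 : ∀ v : ZMod 2,
      Function.update (Function.update y i v) i (Q x y) = Function.update y i (Q x y) := by
    intro v; simp
  have hval : ∀ v : ZMod 2, (Function.update y i v) i = v := by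
    intro v; simp
  have sum2 : ∀ {M : Type} [AddCommMonoid M] (H : ZMod 2 → M),
      ∑ v : ZMod 2, H v = H 0 + H 1 := by
    intro M _ H
    exact Fin.sum_univ_two H
  rw [sum2, sum2, sum2, sum2]
  simp only [hupd, hu2, hval]
  have h0 : (((0 : ZMod 2)).val : ℚ) = 0 := by norm_num
  have h1 : (((1 : ZMod 2)).val : ℚ) = 1 := by norm_num [ZMod.val_one]
  rcases zmod2_cases (Q x y) with hq | hq <;> rw [hq] <;>
    simp only [h0, h1] <;>
    norm_num <;>
    simp only [ph_add, ph_half, ph_one, ph_zero] <;>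
    module
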